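/- Let H be a bipartite graph with bipartition A ∪ B and r := max_{b∈B} deg(b), and for 1 ≤ k ≤ r let α_k := d_k / C(|A|, k), where d_k is the number of vertices in B of degree k. Then, for J the (|A|, r)-downset graph and the symmetric weight vector α = (α_k)_{k=1}^r, every graphon W satisfies t_H(W) ≥ t_J^α(W). -/

import Mathlib

open MeasureTheory

/-- The unit box `[0,1]^ι`. -/
def unitBox (ι : Type*) : Set (ι → ℝ) := Set.univ.pi fun _ => Set.Icc (0 : ℝ) 1

/-- `ρ(x_F) = ∫_0^1 ∏_{i ∈ F} W(x_i, y) dy`. -/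
noncomputable def rho {A : Type*} (W : ℝ → ℝ → ℝ) (x : A → ℝ) (F : Finset A) : ℝ :=
  ∫ y in Set.Icc (0 : ℝ) 1, ∏ i ∈ F, W (x i) y

/-- The homomorphism density of a bipartite graph, given by its parts `A`, `B` and
its edge set `E ⊆ A × B`, in a graphon `W`. -/
noncomputable def bipDensity {A B : Type*} [Fintype A] [Fintype B]
    (E : Finset (A × B)) (W : ℝ → ℝ → ℝ) : ℝ :=
  ∫ x in unitBox A, ∫ y in unitBox B, ∏ e ∈ E, W (x e.1) (y e.2)

/-- The `α`-weighted homomorphism density of the `(m,r)`-downset graph for a symmetric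
real weight vector `α = (α_k)_{k=1}^r` (real powers). -/
noncomputable def downsetDensityReal (m r : ℕ) (α : ℕ → ℝ) (W : ℝ → ℝ → ℝ) : ℝ :=
  ∫ x in unitBox (Fin m),
    ∏ F ∈ Finset.univ.filter (fun F : Finset (Fin m) => 1 ≤ F.card ∧ F.card ≤ r),
      rho W x F ^ α F.card

/-!
Write `P x = ∏_b ρ(x_{N(b)})`, so that `t_H(W) = ∫ P`. The coordinates of `x` are
i.i.d. uniform, hence `∫ P (x ∘ σ) = ∫ P` for every permutation `σ` of `A`, and Hölder's
inequality with the `|A|!` exponents `1/|A|!` gives `∫ ∏_σ P (x ∘ σ) ^ (1/|A|!) ≤ t_H(W)`.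
The left-hand side is `t_J^α(W)`: as `σ` runs over the permutations, `σ(N(b))` hits each
`k`-subset of `A`, `k = deg b`, exactly `k! (|A| - k)!` times, so a `k`-set `F` receives
the total exponent `d_k / C(|A|, k) = α_k` in the pointwise product.
-/

open Finset Equiv
open scoped Pointwise Nat

section UnitBox

variable {ι κ : Type*} [Fintype ι] [Fintype κ]

lemma volume_restrict_unitBox :
    volume.restrict (unitBox ι) =
      Measure.pi fun _ : ι => volume.restrict (Set.Icc (0 : ℝ) 1) := by
  rw [unitBox, volume_pi, Measure.restrict_pi_pi]

instance isProbabilityMeasure_restrict_unitBox :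
    IsProbabilityMeasure (volume.restrict (unitBox ι)) :=
  ⟨by rw [Measure.restrict_apply_univ, unitBox, volume_pi_pi]; simp [Real.volume_Icc]⟩

lemma integral_unitBox_prod (g : ι → ℝ → ℝ) :
    ∫ y in unitBox ι, ∏ i, g i (y i) = ∏ i, ∫ t in Set.Icc (0 : ℝ) 1, g i t := by
  rw [volume_restrict_unitBox]
  exact integral_fintype_prod_eq_prod g

lemma measurePreserving_unitBox_comp_equiv (e : ι ≃ κ) :
    MeasurePreserving (MeasurableEquiv.arrowCongr' e.symm (MeasurableEquiv.refl ℝ))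
      (volume.restrict (unitBox κ)) (volume.restrict (unitBox ι)) := by
  rw [volume_restrict_unitBox, volume_restrict_unitBox]
  exact measurePreserving_arrowCongr' _ _ e.symm _ fun _ => MeasurePreserving.id _

lemma integral_unitBox_comp_equiv (e : ι ≃ κ) (f : (ι → ℝ) → ℝ) :
    ∫ x in unitBox κ, f (x ∘ e) = ∫ x in unitBox ι, f x :=
  (measurePreserving_unitBox_comp_equiv e).integral_comp' f

lemma integrable_unitBox_comp_equiv (e : ι ≃ κ) {f : (ι → ℝ) → ℝ}
    (hf : Integrable f (volume.restrict (unitBox ι))) :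
    Integrable (fun x => f (x ∘ e)) (volume.restrict (unitBox κ)) :=
  ((measurePreserving_unitBox_comp_equiv e).integrable_comp_emb
    (MeasurableEquiv.measurableEmbedding _)).2 hf

end UnitBox

theorem integral_prod_rpow_le_prod_integral_rpow {X ι : Type*} [MeasurableSpace X]
    {μ : Measure X} (s : Finset ι) {f : ι → X → ℝ} (hf0 : ∀ i ∈ s, 0 ≤ f i)
    (hf : ∀ i ∈ s, Integrable (f i) μ) {p : ι → ℝ} (hp : ∀ i ∈ s, 0 ≤ p i)
    (hps : ∑ i ∈ s, p i = 1) :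
    ∫ x, ∏ i ∈ s, f i x ^ p i ∂μ ≤ ∏ i ∈ s, (∫ x, f i x ∂μ) ^ p i := by
  have hprod0 : ∀ x, 0 ≤ ∏ i ∈ s, f i x ^ p i := fun x =>
    prod_nonneg fun i hi => Real.rpow_nonneg (hf0 i hi x) _
  have hint0 : ∀ i ∈ s, 0 ≤ ∫ x, f i x ∂μ := fun i hi => integral_nonneg (hf0 i hi)
  rw [← ENNReal.ofReal_le_ofReal_iff (prod_nonneg fun i hi => Real.rpow_nonneg (hint0 i hi) _)]
  calc ENNReal.ofReal (∫ x, ∏ i ∈ s, f i x ^ p i ∂μ)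
      ≤ ∫⁻ x, ENNReal.ofReal (∏ i ∈ s, f i x ^ p i) ∂μ := by
        rw [← Real.enorm_of_nonneg (integral_nonneg hprod0)]
        simpa only [Real.enorm_of_nonneg (hprod0 _)] using
          enorm_integral_le_lintegral_enorm (μ := μ) fun x => ∏ i ∈ s, f i x ^ p i
    _ = ∫⁻ x, ∏ i ∈ s, ENNReal.ofReal (f i x) ^ p i ∂μ := by
        refine lintegral_congr fun x => ?_
        rw [ENNReal.ofReal_prod_of_nonneg fun i hi => Real.rpow_nonneg (hf0 i hi x) _]
        exact prod_congr rfl fun i hi =>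
          (ENNReal.ofReal_rpow_of_nonneg (hf0 i hi x) (hp i hi)).symm
    _ ≤ ∏ i ∈ s, (∫⁻ x, ENNReal.ofReal (f i x) ∂μ) ^ p i :=
        ENNReal.lintegral_prod_norm_pow_le s
          (fun i hi => (hf i hi).aemeasurable.ennreal_ofReal) hps hp
    _ = ENNReal.ofReal (∏ i ∈ s, (∫ x, f i x ∂μ) ^ p i) := by
        rw [ENNReal.ofReal_prod_of_nonneg fun i hi => Real.rpow_nonneg (hint0 i hi) _]
        refine prod_congr rfl fun i hi => ?_
        rw [← ENNReal.ofReal_rpow_of_nonneg (hint0 i hi) (hp i hi),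
          ofReal_integral_eq_lintegral_ofReal (hf i hi) (.of_forall (hf0 i hi))]

theorem integral_prod_perm_rpow_le_integral {A : Type*} [Fintype A] [DecidableEq A]
    {P : (A → ℝ) → ℝ} (hP0 : 0 ≤ P) (hP : Integrable P (volume.restrict (unitBox A))) :
    ∫ x in unitBox A, ∏ σ : Perm A, P (x ∘ σ) ^ ((Fintype.card A)! : ℝ)⁻¹ ≤
      ∫ x in unitBox A, P x := by
  have hfact : ((Fintype.card A)! : ℝ) ≠ 0 := by positivity
  calc ∫ x in unitBox A, ∏ σ : Perm A, P (x ∘ σ) ^ ((Fintype.card A)! : ℝ)⁻¹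
      ≤ ∏ σ : Perm A, (∫ x in unitBox A, P (x ∘ σ)) ^ ((Fintype.card A)! : ℝ)⁻¹ :=
        integral_prod_rpow_le_prod_integral_rpow (f := fun (σ : Perm A) x => P (x ∘ σ))
          (p := fun _ => ((Fintype.card A)! : ℝ)⁻¹) _ (fun σ _ x => hP0 (x ∘ σ))
          (fun σ _ => integrable_unitBox_comp_equiv σ hP) (fun _ _ => by positivity)
          (by rw [sum_const, Finset.card_univ, Fintype.card_perm, nsmul_eq_mul,
            mul_inv_cancel₀ hfact])
    _ = ∫ x in unitBox A, P x := by
        simp_rw [integral_unitBox_comp_equiv, prod_const, Finset.card_univ, Fintype.card_perm]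
        rw [← Real.rpow_natCast, ← Real.rpow_mul (integral_nonneg hP0), inv_mul_cancel₀ hfact,
          Real.rpow_one]

lemma exists_perm_smul_finset_eq {A : Type*} [DecidableEq A] {S F : Finset A} (h : #S = #F) :
    ∃ τ : Perm A, τ • S = F := by
  obtain ⟨τ, hτ⟩ := Perm.exists_map_finset_eq S F h
  exact ⟨τ, by rw [← hτ, smul_finset_def, map_eq_image]; rfl⟩

section PermCounting

variable {A : Type*} [Fintype A] [DecidableEq A]

lemma card_perm_smul_finset_eq_of_smul_eq {S F : Finset A} {τ : Perm A} (hτ : τ • S = F) :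
    #{σ : Perm A | σ • S = F} = #{σ : Perm A | σ • S = S} := by
  refine card_nbij' (τ⁻¹ * ·) (τ * ·) (fun σ hσ => ?_) (fun σ hσ => ?_)
    (fun σ _ => by simp) (fun σ _ => by simp)
  · simp only [coe_filter, mem_univ, true_and, Set.mem_ofPred_eq] at hσ ⊢
    rw [mul_smul, hσ, inv_smul_eq_iff, hτ]
  · simp only [coe_filter, mem_univ, true_and, Set.mem_ofPred_eq] at hσ ⊢
    rw [mul_smul, hσ, hτ]

theorem card_perm_smul_finset_eq {S F : Finset A} (h : #S = #F) :
    #{σ : Perm A | σ • S = F} = (#S)! * (Fintype.card A - #S)! := by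
  -- The `C(|A|, #S)` fibres of `σ ↦ σ • S` all have the size of the stabiliser of `S`.
  have hfiber : ∀ G ∈ powersetCard #S univ,
      #{σ : Perm A | σ • S = G} = #{σ : Perm A | σ • S = S} :=
    fun G hG => card_perm_smul_finset_eq_of_smul_eq
      (exists_perm_smul_finset_eq (mem_powersetCard.1 hG).2.symm).choose_spec
  have hsum := card_eq_sum_card_fiberwise (s := univ) (t := powersetCard #S univ)
    (f := fun σ : Perm A => σ • S) (by simp [card_smul_finset])
  rw [sum_congr rfl hfiber, sum_const, card_powersetCard, Finset.card_univ, Finset.card_univ,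
    Fintype.card_perm, smul_eq_mul,
    ← Nat.choose_mul_factorial_mul_factorial (card_le_univ S), mul_assoc] at hsum
  rw [hfiber F (by simp [h]), Nat.eq_of_mul_eq_mul_left (Nat.choose_pos (card_le_univ S)) hsum]

theorem prod_perm_smul_finset {M : Type*} [CommMonoid M] (g : Finset A → M) (S : Finset A) :
    ∏ σ : Perm A, g (σ • S) =
      ∏ F ∈ powersetCard #S univ, g F ^ ((#S)! * (Fintype.card A - #S)!) := by
  rw [← prod_fiberwise_of_maps_to (t := powersetCard #S univ) (g := (· • S))
    (by simp [card_smul_finset])]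
  refine prod_congr rfl fun F hF => ?_
  rw [prod_congr rfl fun σ hσ => congrArg g (mem_filter.1 hσ).2, prod_const,
    card_perm_smul_finset_eq (mem_powersetCard.1 hF).2.symm]

theorem prod_perm_smul_finset_rpow (ρ : Finset A → ℝ) (hρ : ∀ F, 0 ≤ ρ F) (S : Finset A) :
    ∏ σ : Perm A, ρ (σ • S) ^ ((Fintype.card A)! : ℝ)⁻¹ =
      ∏ F ∈ powersetCard #S univ, ρ F ^ ((Fintype.card A).choose #F : ℝ)⁻¹ := by
  rw [prod_perm_smul_finset (fun F => ρ F ^ ((Fintype.card A)! : ℝ)⁻¹)]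
  refine prod_congr rfl fun F hF => ?_
  rw [(mem_powersetCard.1 hF).2, ← Real.rpow_natCast, ← Real.rpow_mul (hρ F),
    Nat.cast_choose ℝ (card_le_univ S)]
  push_cast
  field_simp

end PermCounting

lemma prod_prod_powersetCard {A B M : Type*} [Fintype A] [Fintype B] [CommMonoid M]
    (k : B → ℕ) (g : Finset A → M) :
    ∏ b, ∏ F ∈ powersetCard (k b) univ, g F = ∏ F, g F ^ #{b | k b = #F} := by
  rw [prod_comm' (t' := univ) (s' := fun F => {b | k b = #F}) (by simp [eq_comm])]
  simp only [prod_const]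

theorem prod_downset_rpow_eq_prod_perm {A B : Type*} [Fintype A] [DecidableEq A] [Fintype B]
    (N : B → Finset A) {r : ℕ} (hN : ∀ b, #(N b) ≤ r) {α : ℕ → ℝ}
    (hα : ∀ k, 1 ≤ k → k ≤ r →
      α k = (#{b | #(N b) = k} : ℝ) / ((Fintype.card A).choose k : ℝ))
    (ρ : Finset A → ℝ) (hρ : ∀ F, 0 ≤ ρ F) (hρ_empty : ρ ∅ = 1) :
    ∏ F ∈ univ.filter (fun F : Finset A => 1 ≤ #F ∧ #F ≤ r), ρ F ^ α #F =
      ∏ σ : Perm A, (∏ b, ρ (σ • N b)) ^ ((Fintype.card A)! : ℝ)⁻¹ := by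
  symm
  calc ∏ σ : Perm A, (∏ b, ρ (σ • N b)) ^ ((Fintype.card A)! : ℝ)⁻¹
      = ∏ b, ∏ σ : Perm A, ρ (σ • N b) ^ ((Fintype.card A)! : ℝ)⁻¹ := by
        simp_rw [← Real.finsetProd_rpow _ _ fun b _ => hρ _]
        exact prod_comm
    _ = ∏ b, ∏ F ∈ powersetCard #(N b) univ, ρ F ^ ((Fintype.card A).choose #F : ℝ)⁻¹ := by
        simp_rw [prod_perm_smul_finset_rpow ρ hρ]
    _ = ∏ F, (ρ F ^ ((Fintype.card A).choose #F : ℝ)⁻¹) ^ #{b | #(N b) = #F} :=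
        prod_prod_powersetCard _ _
    _ = ∏ F, if 1 ≤ #F ∧ #F ≤ r then ρ F ^ α #F else 1 := by
        refine prod_congr rfl fun F _ => ?_
        split_ifs with hF
        · rw [hα _ hF.1 hF.2, ← Real.rpow_natCast, ← Real.rpow_mul (hρ F), inv_mul_eq_div]
        · rcases Nat.eq_zero_or_pos #F with hF0 | hF0
          · rw [card_eq_zero.1 hF0, hρ_empty, Real.one_rpow, one_pow]
          · have : #{b | #(N b) = #F} = 0 := card_eq_zero.2 <| filter_false_of_mem
              fun b _ hb => hF ⟨hF0, hb ▸ hN b⟩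
            rw [this, pow_zero]
    _ = _ := (prod_filter _ _).symm

section Rho

variable {A : Type*} {W : ℝ → ℝ → ℝ}

lemma rho_nonneg (hW : ∀ x y, 0 ≤ W x y) (x : A → ℝ) (F : Finset A) : 0 ≤ rho W x F :=
  integral_nonneg fun _ => prod_nonneg fun _ _ => hW _ _

lemma rho_le_one (hW : ∀ x y, W x y ∈ Set.Icc (0 : ℝ) 1) (x : A → ℝ) (F : Finset A) :
    rho W x F ≤ 1 := by
  have : rho W x F ≤ ∫ _ in Set.Icc (0 : ℝ) 1, (1 : ℝ) :=
    integral_mono_of_nonneg (.of_forall fun _ => prod_nonneg fun _ _ => (hW _ _).1)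
      (integrable_const _)
      (.of_forall fun _ => prod_le_one (fun _ _ => (hW _ _).1) fun _ _ => (hW _ _).2)
  simpa [Real.volume_Icc] using this

lemma rho_empty (x : A → ℝ) : rho W x ∅ = 1 := by
  simp [rho]

lemma measurable_rho (hW : Measurable (Function.uncurry W)) (F : Finset A) :
    Measurable fun x : A → ℝ => rho W x F := by
  have : Measurable fun p : (A → ℝ) × ℝ => ∏ i ∈ F, W (p.1 i) p.2 :=
    measurable_prod _ fun i _ =>
      hW.comp (f := fun p : (A → ℝ) × ℝ => (p.1 i, p.2)) (by fun_prop)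
  exact this.stronglyMeasurable.integral_prod_right'.measurable

lemma rho_comp_embedding {κ : Type*} (x : κ → ℝ) (e : A ↪ κ) (F : Finset A) :
    rho W (x ∘ e) F = rho W x (F.map e) := by
  simp only [rho, prod_map, Function.comp_apply]

lemma integrable_prod_rho [Fintype A] {ι : Type*} (s : Finset ι) (N : ι → Finset A)
    (hWmeas : Measurable (Function.uncurry W)) (hW : ∀ x y, W x y ∈ Set.Icc (0 : ℝ) 1) :
    Integrable (fun x => ∏ i ∈ s, rho W x (N i)) (volume.restrict (unitBox A)) := by
  refine .of_bound (measurable_prod _ fun i _ => measurable_rho hWmeas _).aestronglyMeasurable 1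
    (.of_forall fun x => ?_)
  have hρ0 : ∀ i ∈ s, 0 ≤ rho W x (N i) := fun i _ => rho_nonneg (fun x y => (hW x y).1) x _
  rw [Real.norm_of_nonneg (prod_nonneg hρ0)]
  exact prod_le_one hρ0 fun i _ => rho_le_one hW x _

lemma rho_comp_perm [DecidableEq A] (x : A → ℝ) (σ : Perm A) (F : Finset A) :
    rho W (x ∘ σ) F = rho W x (σ • F) := by
  rw [smul_finset_def, show F.image (σ • ·) = F.map σ.toEmbedding by rw [map_eq_image]; rfl]
  exact rho_comp_embedding x σ.toEmbedding F

end Rho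

section BipartiteGraph

lemma injOn_fst_filter_snd_eq {A B : Type*} [DecidableEq B] (E : Finset (A × B)) (b : B) :
    Set.InjOn Prod.fst (E.filter fun e => e.2 = b : Set (A × B)) := by
  intro e he e' he' h
  simp only [coe_filter, Set.mem_ofPred_eq] at he he'
  exact Prod.ext h (he.2.trans he'.2.symm)

variable {A B : Type*} [DecidableEq A] [DecidableEq B]

def nbhd (E : Finset (A × B)) (b : B) : Finset A := (E.filter fun e => e.2 = b).image Prod.fst

lemma card_nbhd (E : Finset (A × B)) (b : B) : #(nbhd E b) = #(E.filter fun e => e.2 = b) :=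
  card_image_of_injOn (injOn_fst_filter_snd_eq E b)

lemma bipDensity_eq_integral_prod_rho [Fintype A] [Fintype B] (E : Finset (A × B))
    (W : ℝ → ℝ → ℝ) :
    bipDensity E W = ∫ x in unitBox A, ∏ b, rho W x (nbhd E b) := by
  unfold bipDensity
  refine integral_congr_ae (.of_forall fun x => ?_)
  have hfiber : ∀ y : B → ℝ,
      ∏ e ∈ E, W (x e.1) (y e.2) = ∏ b, ∏ a ∈ nbhd E b, W (x a) (y b) := fun y => by
    rw [← prod_fiberwise E Prod.snd]
    refine prod_congr rfl fun b _ => ?_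
    rw [nbhd, prod_image (injOn_fst_filter_snd_eq E b)]
    exact prod_congr rfl fun e he => by rw [(mem_filter.1 he).2]
  simp only [hfiber]
  exact integral_unitBox_prod fun b t => ∏ a ∈ nbhd E b, W (x a) t

end BipartiteGraph

section Downset

variable {A : Type*} [Fintype A] (r : ℕ) (α : ℕ → ℝ) (W : ℝ → ℝ → ℝ)

noncomputable def downsetIntegrand (x : A → ℝ) : ℝ :=
  ∏ F ∈ univ.filter (fun F : Finset A => 1 ≤ #F ∧ #F ≤ r), rho W x F ^ α #F

lemma downsetIntegrand_comp_equiv {κ : Type*} [Fintype κ] (e : A ≃ κ) (x : κ → ℝ) :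
    downsetIntegrand r α W (x ∘ e) = downsetIntegrand r α W x :=
  prod_equiv e.finsetCongr (by simp) fun F _ => by
    rw [Equiv.finsetCongr_apply, card_map, ← rho_comp_embedding]
    rfl

lemma downsetDensityReal_eq_integral :
    downsetDensityReal (Fintype.card A) r α W = ∫ x in unitBox A, downsetIntegrand r α W x := by
  change ∫ x in unitBox (Fin _), downsetIntegrand r α W x = _
  rw [← integral_unitBox_comp_equiv (Fintype.equivFin A).symm]
  simp_rw [downsetIntegrand_comp_equiv]

end Downset

theorem downsetIntegrand_eq_prod_perm {A B : Type*} [Fintype A] [DecidableEq A] [Fintype B]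
    [DecidableEq B] {E : Finset (A × B)} {r : ℕ} (hN : ∀ b, #(nbhd E b) ≤ r) {α : ℕ → ℝ}
    (hα : ∀ k, 1 ≤ k → k ≤ r →
      α k = (#{b | #(nbhd E b) = k} : ℝ) / ((Fintype.card A).choose k : ℝ))
    {W : ℝ → ℝ → ℝ} (hW : ∀ x y, 0 ≤ W x y) (x : A → ℝ) :
    downsetIntegrand r α W x =
      ∏ σ : Perm A, (∏ b, rho W (x ∘ σ) (nbhd E b)) ^ ((Fintype.card A)! : ℝ)⁻¹ := by
  simp_rw [rho_comp_perm]
  exact prod_downset_rpow_eq_prod_perm (nbhd E) hN hα (rho W x) (rho_nonneg hW x) (rho_empty x)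

theorem holder_trick_downset_general {A B : Type*} [Fintype A] [Fintype B] [DecidableEq B]
    (E : Finset (A × B))
    (r : ℕ) (hr : r = Finset.univ.sup fun b : B => (E.filter fun e => e.2 = b).card)
    (α : ℕ → ℝ)
    (hα : ∀ k, 1 ≤ k → k ≤ r →
      α k = ((Finset.univ.filter fun b : B =>
          (E.filter fun e => e.2 = b).card = k).card : ℝ) /
        ((Fintype.card A).choose k : ℝ))
    (W : ℝ → ℝ → ℝ) (hWmeas : Measurable (Function.uncurry W))
    (hWmem : ∀ x y, W x y ∈ Set.Icc (0 : ℝ) 1) :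
    bipDensity E W ≥ downsetDensityReal (Fintype.card A) r α W := by
  classical
  have hN : ∀ b, #(nbhd E b) ≤ r := fun b => by
    rw [card_nbhd, hr]
    exact le_sup (f := fun b : B => #(E.filter fun e => e.2 = b)) (mem_univ b)
  simp_rw [← card_nbhd] at hα
  rw [ge_iff_le, downsetDensityReal_eq_integral, bipDensity_eq_integral_prod_rho]
  simp_rw [downsetIntegrand_eq_prod_perm hN hα fun x y => (hWmem x y).1]
  exact integral_prod_perm_rpow_le_integral (P := fun x => ∏ b, rho W x (nbhd E b))
    (fun x => prod_nonneg fun b _ => rho_nonneg (fun x y => (hWmem x y).1) x _)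
    (integrable_prod_rho univ (nbhd E) hWmeas hWmem)

/-- let `H` be a bipartite graph with bipartition `A ∪ B`, let
`r = max_{b ∈ B} deg b` and, for `1 ≤ k ≤ r`, let `α_k = d_k / C(|A|,k)` where `d_k` is
the number of vertices of `B` of degree `k`. Then `t_H(W) ≥ t_J^α(W)` for every
graphon `W`, where `J` is the `(|A|, r)`-downset graph. -/
theorem holder_trick_downset {A B : Type*} [Fintype A] [Fintype B] [DecidableEq B]
    (E : Finset (A × B))
    (r : ℕ) (hr : r = Finset.univ.sup fun b : B => (E.filter fun e => e.2 = b).card)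
    (α : ℕ → ℝ)
    (hα : ∀ k, 1 ≤ k → k ≤ r →
      α k = ((Finset.univ.filter fun b : B =>
          (E.filter fun e => e.2 = b).card = k).card : ℝ) /
        ((Fintype.card A).choose k : ℝ))
    (W : ℝ → ℝ → ℝ) (hWmeas : Measurable (Function.uncurry W))
    (hWsymm : ∀ x y, W x y = W y x) (hWmem : ∀ x y, W x y ∈ Set.Icc (0 : ℝ) 1) :
    bipDensity E W ≥ downsetDensityReal (Fintype.card A) r α W :=
  holder_trick_downset_general E r hr α hα W hWmeas hWmem
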